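/- arXiv:dg-ga/9712011 — 2 statements merged into one kernel-verified Lean document; each statement's English description precedes it below -/
import Mathlib

section
/- Let f : U → ℝ³ ⊂ ℍ be a conformal immersion of an open subset U of ℂ (with coordinate z = x + iy) with unit normal N satisfying ∂f/∂y = N · ∂f/∂x (quaternionic multiplication, with ℝ³ identified with the imaginary quaternions). For smooth real functions a, b : U → ℝ, the tangential part of d((a + bN) df) vanishes identically if and only if a + ib is holomorphic, i.e., a and b satisfy the Cauchy–Riemann equations ∂a/∂x = ∂b/∂y and ∂a/∂y = -∂b/∂x. -/
open Quaternion


private lemma quat_anticomm (p q : ℍ[ℝ]) (hp : p.re = 0) (hq : q.re = 0)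
    (hpq : (p * q).re = 0) : p * q = -(q * p) := by
  have h : p.imI * q.imI + p.imJ * q.imJ + p.imK * q.imK = 0 := by
    have h' := hpq
    simp only [Quaternion.re_mul, hp, hq, zero_mul, mul_zero, zero_sub] at h'
    linarith
  ext <;>
    simp only [Quaternion.re_mul, Quaternion.imI_mul, Quaternion.imJ_mul, Quaternion.imK_mul,
      Quaternion.re_neg, Quaternion.imI_neg, Quaternion.imJ_neg, Quaternion.imK_neg,
      hp, hq, zero_mul, mul_zero, zero_sub, zero_add, add_zero, sub_zero] <;>
    ring_nf <;> linarith

private lemma quat_indep (n p : ℍ[ℝ]) (hn : n ^ 2 = -1) (hp : p ≠ 0)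
    (α β : ℝ) (h : α • (n * p) + β • p = 0) : α = 0 ∧ β = 0 := by
  have hn' : n * n = -1 := by rw [← pow_two]; exact hn
  have h1 : α • (n * p) = -(β • p) := by
    have h' := h; rw [add_eq_zero_iff_eq_neg] at h'; exact h'
  have h2 : β • (n * p) = α • p := by
    have h3 := congrArg (fun x => n * x) h1
    simp only [mul_smul_comm, mul_neg] at h3
    rw [← mul_assoc, hn', neg_one_mul, smul_neg] at h3
    exact (neg_injective h3).symm
  have hc : (α * α + β * β) • p = 0 := by
    have e1 : α • (β • (n * p)) = (α * α) • p := by rw [h2, smul_smul]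
    have e2 : α • (β • (n * p)) = -((β * β) • p) := by
      rw [smul_comm, h1, smul_neg, smul_smul]
    rw [add_smul, ← e1, e2, neg_add_cancel]
  have hαβ : α * α + β * β = 0 := by
    rcases smul_eq_zero.1 hc with h' | h'
    · exact h'
    · exact absurd h' hp
  constructor <;> nlinarith

private lemma quat_conj_calc (n p u v : ℍ[ℝ]) (hn : n * n = -1)
    (hp : n * p = -(p * n)) (hu : n * u = -(u * n)) (hv : n * v = -(v * n))
    (α γ β : ℝ) :
    (α • (n * p) - γ • p + β • ((u * n - v) * p)) +
      n * (α • (n * p) - γ • p + β • ((u * n - v) * p)) * n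
    = (2 * α) • (n * p) - (2 * γ) • p := by
  have h1 : n * (n * p) * n = n * p := by
    rw [← mul_assoc, hn, neg_one_mul, neg_mul, ← hp]
  have h2 : n * p * n = p := by
    rw [hp, neg_mul, mul_assoc, hn, mul_neg_one, neg_neg]
  have hnu : n * (u * n) = u := by
    rw [← mul_assoc, hu, neg_mul, mul_assoc, hn, mul_neg_one, neg_neg]
  have h3 : n * (u * n * p) * n = -(u * n * p) := by
    rw [← mul_assoc, hnu, mul_assoc, show p * n = -(n * p) from by rw [hp, neg_neg],
      mul_neg, ← mul_assoc]
  have h4 : n * (v * p) * n = -(v * p) := by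
    rw [← mul_assoc, hv, neg_mul, neg_mul, mul_assoc v, mul_assoc v, h2]
  simp only [sub_mul]
  have expand : n * (α • (n * p) - γ • p + β • (u * n * p - v * p)) * n
      = α • (n * (n * p) * n) - γ • (n * p * n)
        + β • (n * (u * n * p) * n - n * (v * p) * n) := by
    simp only [sub_mul, mul_add, add_mul, mul_sub, mul_smul_comm, smul_mul_assoc, smul_sub]
  rw [expand, h1, h2, h3, h4]
  module

private noncomputable def reCLM : ℍ[ℝ] →L[ℝ] ℝ :=
  ⟨{ toFun := fun q => q.re
     map_add' := fun _ _ => rfl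
     map_smul' := fun _ _ => rfl }, Quaternion.continuous_re⟩

private lemma reCLM_apply (x : ℍ[ℝ]) : reCLM x = x.re := rfl

private lemma re_fderiv_eq_zero {g : ℂ → ℍ[ℝ]} {g' : ℂ →L[ℝ] ℍ[ℝ]} {z : ℂ} {U : Set ℂ}
    (hU : IsOpen U) (hz : z ∈ U) (hg : ∀ w ∈ U, (g w).re = 0)
    (hg' : HasFDerivAt g g' z) (v : ℂ) : (g' v).re = 0 := by
  have h1 : HasFDerivAt (fun w => reCLM (g w)) (reCLM.comp g') z :=
    reCLM.hasFDerivAt.comp z hg'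
  have h2 : HasFDerivAt (fun w => reCLM (g w)) (0 : ℂ →L[ℝ] ℝ) z := by
    apply (hasFDerivAt_const (𝕜 := ℝ) (0 : ℝ) z).congr_of_eventuallyEq
    filter_upwards [hU.mem_nhds hz] with w hw
    rw [reCLM_apply, hg w hw]
  have h3 := h1.unique h2
  have h4 := congrArg (fun L : ℂ →L[ℝ] ℝ => L v) h3
  simpa [reCLM_apply] using h4

set_option maxHeartbeats 1000000 in
/-- Observation 3 of the paper: let `f : U → Im ℍ ≅ ℝ³` be a smooth conformal
immersion of an open set `U ⊆ ℂ` with unit normal `N` (`N² = -1`,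
`∂f/∂y = N ∂f/∂x`).  For smooth real functions `a, b` on `U`, the tangential
part (the component anticommuting with `N`) of the exterior derivative of the
one-form `(a + bN) df` vanishes on `U` if and only if `a + ib` is holomorphic,
i.e. `a, b` satisfy the Cauchy–Riemann equations `a_x = b_y`, `a_y = -b_x`. -/
theorem stmt_4 (U : Set ℂ) (hU : IsOpen U)
    (f N : ℂ → ℍ[ℝ]) (a b : ℂ → ℝ)
    (hf : ContDiffOn ℝ (⊤ : ℕ∞) f U) (hN : ContDiffOn ℝ (⊤ : ℕ∞) N U)
    (ha : ContDiffOn ℝ (⊤ : ℕ∞) a U) (hb : ContDiffOn ℝ (⊤ : ℕ∞) b U)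
    (hfim : ∀ z ∈ U, (f z).re = 0)
    (hNim : ∀ z ∈ U, (N z).re = 0)
    (hNunit : ∀ z ∈ U, (N z) ^ 2 = -1)
    (himm : ∀ z ∈ U, fderiv ℝ f z 1 ≠ 0)
    (hconf : ∀ z ∈ U, fderiv ℝ f z Complex.I = N z * fderiv ℝ f z 1)
    -- the one-form `τ = (a + bN) df` evaluated on `∂x` and `∂y`:
    (τx τy : ℂ → ℍ[ℝ])
    (hτx : ∀ z, τx z = (((a z : ℝ) : ℍ[ℝ]) + ((b z : ℝ) : ℍ[ℝ]) * N z) * fderiv ℝ f z 1)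
    (hτy : ∀ z, τy z = (((a z : ℝ) : ℍ[ℝ]) + ((b z : ℝ) : ℍ[ℝ]) * N z) * fderiv ℝ f z Complex.I)
    -- the exterior derivative `dτ(∂x, ∂y) = ∂x(τ(∂y)) - ∂y(τ(∂x))`:
    (D : ℂ → ℍ[ℝ])
    (hD : ∀ z, D z = fderiv ℝ τy z 1 - fderiv ℝ τx z Complex.I) :
    (∀ z ∈ U, D z + N z * D z * N z = 0) ↔
      (∀ z ∈ U,
        fderiv ℝ a z 1 = fderiv ℝ b z Complex.I ∧
        fderiv ℝ a z Complex.I = -(fderiv ℝ b z 1)) := by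
  have hτx' : τx = fun w => a w • fderiv ℝ f w 1 + b w • (N w * fderiv ℝ f w 1) := by
    funext w
    rw [hτx w, add_mul, mul_assoc, coe_mul_eq_smul, coe_mul_eq_smul]
  have hτy' : τy = fun w => a w • fderiv ℝ f w Complex.I
      + b w • (N w * fderiv ℝ f w Complex.I) := by
    funext w
    rw [hτy w, add_mul, mul_assoc, coe_mul_eq_smul, coe_mul_eq_smul]
  have key : ∀ z ∈ U, D z + N z * D z * N z
      = (2 * (fderiv ℝ a z 1 - fderiv ℝ b z Complex.I)) • (N z * fderiv ℝ f z 1)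
        - (2 * (fderiv ℝ a z Complex.I + fderiv ℝ b z 1)) • fderiv ℝ f z 1 := by
    intro z hz
    have hzU : U ∈ nhds z := hU.mem_nhds hz
    have hn' : N z * N z = -1 := by rw [← pow_two]; exact hNunit z hz
    -- differentiability facts
    have hfd : ∀ w ∈ U, HasFDerivAt f (fderiv ℝ f w) w := fun w hw =>
      ((hf.contDiffAt (hU.mem_nhds hw)).differentiableAt (by simp)).hasFDerivAt
    have hNz : HasFDerivAt N (fderiv ℝ N z) z :=
      ((hN.contDiffAt hzU).differentiableAt (by simp)).hasFDerivAt
    have haz : HasFDerivAt a (fderiv ℝ a z) z :=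
      ((ha.contDiffAt hzU).differentiableAt (by simp)).hasFDerivAt
    have hbz : HasFDerivAt b (fderiv ℝ b z) z :=
      ((hb.contDiffAt hzU).differentiableAt (by simp)).hasFDerivAt
    have hf' : ContDiffOn ℝ (⊤ : ℕ∞) (fun w => fderiv ℝ f w) U := hf.fderiv_of_isOpen hU (by simp)
    have hF'' : HasFDerivAt (fun w => fderiv ℝ f w)
        (fderiv ℝ (fun w => fderiv ℝ f w) z) z :=
      ((hf'.contDiffAt hzU).differentiableAt (by simp)).hasFDerivAt
    set F'' := fderiv ℝ (fun w => fderiv ℝ f w) z with hF''def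
    -- symmetry of second derivative
    have hsymm : F'' Complex.I 1 = F'' 1 Complex.I :=
      second_derivative_symmetric_of_eventually
        (Filter.eventually_of_mem hzU hfd) hF'' Complex.I 1
    -- derivative of evaluated fderiv
    have heval : ∀ v : ℂ, HasFDerivAt (fun w => fderiv ℝ f w v)
        ((ContinuousLinearMap.apply ℝ ℍ[ℝ] v).comp F'') z := fun v =>
      (ContinuousLinearMap.apply ℝ ℍ[ℝ] v).hasFDerivAt.comp z hF''
    -- derivative of τy in direction 1
    have hτyD : HasFDerivAt τy
        ((a z • ((ContinuousLinearMap.apply ℝ ℍ[ℝ] Complex.I).comp F'')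
            + (fderiv ℝ a z).smulRight (fderiv ℝ f z Complex.I))
          + (b z • (N z • ((ContinuousLinearMap.apply ℝ ℍ[ℝ] Complex.I).comp F'')
              + (fderiv ℝ N z).smulRight (fderiv ℝ f z Complex.I))
            + (fderiv ℝ b z).smulRight (N z * fderiv ℝ f z Complex.I))) z := by
      rw [hτy']
      exact (haz.smul (heval Complex.I)).add (hbz.smul (hNz.mul' (heval Complex.I)))
    have hτxD : HasFDerivAt τx
        ((a z • ((ContinuousLinearMap.apply ℝ ℍ[ℝ] 1).comp F'')
            + (fderiv ℝ a z).smulRight (fderiv ℝ f z 1))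
          + (b z • (N z • ((ContinuousLinearMap.apply ℝ ℍ[ℝ] 1).comp F'')
              + (fderiv ℝ N z).smulRight (fderiv ℝ f z 1))
            + (fderiv ℝ b z).smulRight (N z * fderiv ℝ f z 1))) z := by
      rw [hτx']
      exact (haz.smul (heval 1)).add (hbz.smul (hNz.mul' (heval 1)))
    have hτy1 : fderiv ℝ τy z 1
        = a z • (F'' 1 Complex.I) + fderiv ℝ a z 1 • fderiv ℝ f z Complex.I
          + (b z • (N z * (F'' 1 Complex.I) + fderiv ℝ N z 1 * fderiv ℝ f z Complex.I)
            + fderiv ℝ b z 1 • (N z * fderiv ℝ f z Complex.I)) := by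
      rw [hτyD.fderiv]
      simp only [ContinuousLinearMap.add_apply, ContinuousLinearMap.smul_apply,
        ContinuousLinearMap.smulRight_apply, ContinuousLinearMap.comp_apply,
        ContinuousLinearMap.apply_apply, smul_add, smul_eq_mul]
    have hτxI : fderiv ℝ τx z Complex.I
        = a z • (F'' Complex.I 1) + fderiv ℝ a z Complex.I • fderiv ℝ f z 1
          + (b z • (N z * (F'' Complex.I 1) + fderiv ℝ N z Complex.I * fderiv ℝ f z 1)
            + fderiv ℝ b z Complex.I • (N z * fderiv ℝ f z 1)) := by
      rw [hτxD.fderiv]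
      simp only [ContinuousLinearMap.add_apply, ContinuousLinearMap.smul_apply,
        ContinuousLinearMap.smulRight_apply, ContinuousLinearMap.comp_apply,
        ContinuousLinearMap.apply_apply, smul_add, smul_eq_mul]
    -- anticommutation facts
    have hfz : HasFDerivAt f (fderiv ℝ f z) z := hfd z hz
    have hF1re : (fderiv ℝ f z 1).re = 0 := re_fderiv_eq_zero hU hz hfim hfz 1
    have hFIre : (fderiv ℝ f z Complex.I).re = 0 := re_fderiv_eq_zero hU hz hfim hfz Complex.I
    have hp : N z * fderiv ℝ f z 1 = -(fderiv ℝ f z 1 * N z) := by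
      apply quat_anticomm _ _ (hNim z hz) hF1re
      rw [← hconf z hz]; exact hFIre
    have hNN0 : HasFDerivAt (fun w => N w * N w)
        (N z • fderiv ℝ N z + (fderiv ℝ N z).smulRight (N z)) z := hNz.mul' hNz
    have hNNconst : HasFDerivAt (fun w => N w * N w) (0 : ℂ →L[ℝ] ℍ[ℝ]) z := by
      apply (hasFDerivAt_const (𝕜 := ℝ) (-1 : ℍ[ℝ]) z).congr_of_eventuallyEq
      filter_upwards [hzU] with w hw
      rw [← pow_two]; exact hNunit w hw
    have hNuniq := hNN0.unique hNNconst
    have hNanti : ∀ v : ℂ, N z * fderiv ℝ N z v = -(fderiv ℝ N z v * N z) := by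
      intro v
      have h5 := congrArg (fun L : ℂ →L[ℝ] ℍ[ℝ] => L v) hNuniq
      simp only [ContinuousLinearMap.add_apply, ContinuousLinearMap.smul_apply,
        ContinuousLinearMap.smulRight_apply, ContinuousLinearMap.zero_apply,
        smul_eq_mul] at h5
      exact eq_neg_of_add_eq_zero_left h5
    -- assemble D z
    have hnn : N z * (N z * fderiv ℝ f z 1) = -(fderiv ℝ f z 1) := by
      rw [← mul_assoc, hn', neg_one_mul]
    have hDz : D z = (fderiv ℝ a z 1 - fderiv ℝ b z Complex.I) • (N z * fderiv ℝ f z 1)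
        - (fderiv ℝ a z Complex.I + fderiv ℝ b z 1) • fderiv ℝ f z 1
        + b z • ((fderiv ℝ N z 1 * N z - fderiv ℝ N z Complex.I) * fderiv ℝ f z 1) := by
      rw [hD z, hτy1, hτxI, hsymm, hconf z hz, hnn]
      rw [show fderiv ℝ N z 1 * (N z * fderiv ℝ f z 1)
          = fderiv ℝ N z 1 * N z * fderiv ℝ f z 1 from (mul_assoc _ _ _).symm]
      simp only [sub_mul]
      module
    rw [hDz]
    exact quat_conj_calc (N z) (fderiv ℝ f z 1) (fderiv ℝ N z 1) (fderiv ℝ N z Complex.I)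
      hn' hp (hNanti 1) (hNanti Complex.I) _ _ _
  constructor
  · intro h z hz
    have hk := key z hz
    rw [h z hz] at hk
    have hk' : (2 * (fderiv ℝ a z 1 - fderiv ℝ b z Complex.I)) • (N z * fderiv ℝ f z 1)
        + (-(2 * (fderiv ℝ a z Complex.I + fderiv ℝ b z 1))) • fderiv ℝ f z 1 = 0 := by
      rw [neg_smul, ← sub_eq_add_neg, ← hk]
    obtain ⟨h1, h2⟩ := quat_indep (N z) (fderiv ℝ f z 1) (hNunit z hz) (himm z hz) _ _ hk'
    constructor
    · linarith
    · linarith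
  · intro h z hz
    rw [key z hz, (h z hz).1, (h z hz).2]
    simp
end

section
/- Let f : U → Im(ℍ) be a conformal immersion with normal N, let df* be a nonzero anti-conformal tangential quaternion-valued form with *df* = -N df*, and let ω = a df* + b (*df*) with a, b real-valued. If the 2-form identity df* ∧ ω - ω ∧ df* = 0 holds, then b = 0. -/
open Quaternion

/-- Pointwise algebraic form of the key step showing the Hopf form of an
isothermic immersion is a real multiple of `df*`.  With `τ(X) = v`,
`τ(JX) = -Nv`, `ω(X) = a v + b Nv`, `ω(JX) = -N(a v + b Nv)`, the vanishing of
`(τ ∧ ω - ω ∧ τ)(X, JX)` forces `b = 0` whenever `v ≠ 0`. -/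
theorem stmt_16 (N v : ℍ[ℝ]) (a b : ℝ) (hNre : N.re = 0) (hN2 : N ^ 2 = -1)
    (hvre : v.re = 0) (hv : v ≠ 0) (hvN : N * v = -(v * N))
    (hzero :
      (v * (-(N * (a • v + b • (N * v)))) - (-(N * v)) * (a • v + b • (N * v))) -
        ((a • v + b • (N * v)) * (-(N * v)) - (-(N * (a • v + b • (N * v)))) * v)
        = 0) :
    b = 0 := by
  have hNN : N * N = -1 := by rw [← pow_two]; exact hN2
  have hvNe : v * N = -(N * v) := by rw [hvN, neg_neg]
  have hvN' : ∀ x : ℍ[ℝ], v * (N * x) = -(N * (v * x)) := fun x => by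
    rw [← mul_assoc, hvNe, neg_mul, mul_assoc]
  have hN' : ∀ x : ℍ[ℝ], N * (N * x) = -x := fun x => by
    rw [← mul_assoc, hNN, neg_one_mul]
  have key : (v * (-(N * (a • v + b • (N * v)))) - (-(N * v)) * (a • v + b • (N * v))) -
        ((a • v + b • (N * v)) * (-(N * v)) - (-(N * (a • v + b • (N * v)))) * v)
        = (4*b) • (v*v) := by
    simp only [mul_add, add_mul, mul_neg, neg_mul, mul_smul_comm, smul_mul_assoc, mul_assoc,
      hvN', hN', neg_neg, smul_neg]
    module
  rw [key] at hzero
  rcases smul_eq_zero.mp hzero with h | h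
  · rcases mul_eq_zero.mp h with h | h
    · norm_num at h
    · exact h
  · exact absurd (mul_self_eq_zero.mp h) hv
end
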